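/- Let S ⊆ ℕ^d be a local good semigroup with conductor c(S) = (c₁,…,c_d). For each i ∈ {1,…,d} let P_i = {a ∈ ℕ : a < c_i and there exists β ∈ S with β_i = a and β_j = c_j for all j < i}. Then l(S) = Σ_{i=1}^d |P_i| and g(S) = Σ_{i=1}^d (c_i − |P_i|). -/

import Mathlib

/-!
Saturated chains in a set `E ⊆ ℤ^d` with (G1) and (G3) between two given points all have the
same length: two distinct covers of a point are both covered by their least common upper bound,
and induction on the length does the rest. In a translated orthant `b + ℕ^d` unit steps give
`d(b, α) = |α| - |b|`, where `|·|` is the coordinate sum. In `S`, a saturated chain from `0` to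
the conductor `c` is built one coordinate at a time: once the coordinates before `i` have
reached the conductor, the least elements of `S` whose `i`-th coordinate is at least `a`, for
`a` running through the attained values `P_i ∪ {c_i}`, are consecutive, giving `|P_i|` steps.
Hence `d_S(0, α) = Σ |P_i| + |α| - |c|` for `α ≥ c`; comparing with `d_{C(S)}(c, α) = |α| - |c|`
and `d_{ℕ^d}(0, α) = |α|` gives `l(S)` and `g(S)`.
-/

/-- The nonnegative orthant of `ℤ^d`, representing `ℕ^d`. -/
def orthD (d : ℕ) : Set (Fin d → ℤ) := {a | ∀ i, 0 ≤ a i}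

/-- Property (G1): closure under componentwise minimum. -/
def MinClosedD {d : ℕ} (E : Set (Fin d → ℤ)) : Prop := ∀ a ∈ E, ∀ b ∈ E, a ⊓ b ∈ E

/-- Property (G3). -/
def G3PD {d : ℕ} (E : Set (Fin d → ℤ)) : Prop :=
  ∀ a ∈ E, ∀ b ∈ E, a ≠ b → ∀ i, a i = b i →
    ∃ e ∈ E, a i < e i ∧ ∀ j, j ≠ i →
      (min (a j) (b j) ≤ e j ∧ (a j ≠ b j → e j = min (a j) (b j)))

/-- A good semigroup of `ℕ^d` (viewed inside `ℤ^d`). -/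
def IsGoodD {d : ℕ} (S : Set (Fin d → ℤ)) : Prop :=
  S ⊆ orthD d ∧ (0 : Fin d → ℤ) ∈ S ∧ (∀ a ∈ S, ∀ b ∈ S, a + b ∈ S) ∧
  MinClosedD S ∧ (∃ δ : Fin d → ℤ, ∀ y, δ ≤ y → y ∈ S) ∧ G3PD S

/-- A good semigroup is local if its only element with a zero coordinate is `0`. -/
def IsLocalD {d : ℕ} (S : Set (Fin d → ℤ)) : Prop := ∀ a ∈ S, (∃ i, a i = 0) → a = 0

/-- A relative good ideal of `S`. -/
def IsRelGoodIdealD {d : ℕ} (S E : Set (Fin d → ℤ)) : Prop :=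
  E.Nonempty ∧ (∀ e ∈ E, ∀ s ∈ S, e + s ∈ E) ∧ (∃ a ∈ S, ∀ e ∈ E, a + e ∈ S) ∧
  MinClosedD E ∧ G3PD E

/-- A saturated chain of length `n` in `E`. -/
def IsSatChainD {d : ℕ} (E : Set (Fin d → ℤ)) (n : ℕ) (f : ℕ → (Fin d → ℤ)) : Prop :=
  (∀ i ≤ n, f i ∈ E) ∧ (∀ i < n, f i < f (i + 1)) ∧
  (∀ i < n, ∀ c ∈ E, ¬ (f i < c ∧ c < f (i + 1)))

/-- `d_E(a,b)`: the common length of all saturated chains in `E` from `a` to `b`. -/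
noncomputable def chainDistD {d : ℕ} (E : Set (Fin d → ℤ)) (a b : Fin d → ℤ) : ℕ :=
  sSup {n : ℕ | ∃ f : ℕ → (Fin d → ℤ), IsSatChainD E n f ∧ f 0 = a ∧ f n = b}

/-- The (componentwise) minimal element `e(E)` of `E`. -/
noncomputable def minElD {d : ℕ} (E : Set (Fin d → ℤ)) : Fin d → ℤ :=
  fun i => sInf ((fun a => a i) '' E)

/-- The distance `d(E∖F)` between `F ⊆ E`: the common value of
`d_E(e(E),α) - d_F(e(F),α)` for all sufficiently large `α ∈ F`. -/
noncomputable def distD {d : ℕ} (E F : Set (Fin d → ℤ)) : ℤ :=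
  sSup {z : ℤ | ∃ β : Fin d → ℤ, ∀ α ∈ F, β ≤ α →
    (chainDistD E (minElD E) α : ℤ) - (chainDistD F (minElD F) α : ℤ) = z}

/-- The conductor `c(E)`: the componentwise minimal `δ` with `δ + ℕ^d ⊆ E`. -/
noncomputable def condD {d : ℕ} (E : Set (Fin d → ℤ)) : Fin d → ℤ :=
  fun i => sInf ((fun δ => δ i) '' {δ : Fin d → ℤ | ∀ y, δ ≤ y → y ∈ E})

/-- The conductor ideal `C(E) = {β ∈ E : β ≥ c(E)}`. -/
noncomputable def CIdealD {d : ℕ} (E : Set (Fin d → ℤ)) : Set (Fin d → ℤ) :=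
  {b ∈ E | condD E ≤ b}

/-- The length `l(E) = d(E ∖ C(E))`. -/
noncomputable def glenD {d : ℕ} (E : Set (Fin d → ℤ)) : ℤ := distD E (CIdealD E)

/-- The genus `g(E) = d(ℕ^d ∖ E)`. -/
noncomputable def genusD {d : ℕ} (E : Set (Fin d → ℤ)) : ℤ := distD (orthD d) E

/-- `c_E = c₁ + ⋯ + c_d`, the sum of the coordinates of the conductor of `E`. -/
noncomputable def cSumD {d : ℕ} (E : Set (Fin d → ℤ)) : ℤ := ∑ i, condD E i

section Chains

variable {d : ℕ} {E : Set (Fin d → ℤ)} {a b c : Fin d → ℤ}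

def coordSum (a : Fin d → ℤ) : ℤ := ∑ i, a i

lemma coordSum_lt_coordSum (h : a < b) : coordSum a < coordSum b := by
  obtain ⟨hle, i, hi⟩ := Pi.lt_def.1 h
  exact Finset.sum_lt_sum (fun j _ => hle j) ⟨i, Finset.mem_univ i, hi⟩

lemma coordSum_le_coordSum (h : a ≤ b) : coordSum a ≤ coordSum b :=
  Finset.sum_le_sum fun i _ => h i

lemma coordSum_add_single (a : Fin d → ℤ) (j : Fin d) :
    coordSum (a + Pi.single j 1) = coordSum a + 1 := by
  simp [coordSum, Finset.sum_add_distrib]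

def CovByIn (E : Set (Fin d → ℤ)) (a b : Fin d → ℤ) : Prop :=
  a < b ∧ ∀ c ∈ E, ¬ (a < c ∧ c < b)

def HasSatChain (E : Set (Fin d → ℤ)) (a b : Fin d → ℤ) (n : ℕ) : Prop :=
  ∃ f : ℕ → Fin d → ℤ, IsSatChainD E n f ∧ f 0 = a ∧ f n = b

lemma hasSatChain_zero : HasSatChain E a b 0 ↔ a ∈ E ∧ a = b := by
  constructor
  · rintro ⟨f, hf, rfl, rfl⟩
    exact ⟨hf.1 0 le_rfl, rfl⟩
  · rintro ⟨ha, rfl⟩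
    exact ⟨fun _ => a, ⟨fun _ _ => ha, by omega, by omega⟩, rfl, rfl⟩

lemma hasSatChain_succ {n : ℕ} :
    HasSatChain E a c (n + 1) ↔ a ∈ E ∧ ∃ b, CovByIn E a b ∧ HasSatChain E b c n := by
  constructor
  · rintro ⟨f, ⟨hmem, hlt, hcov⟩, rfl, rfl⟩
    refine ⟨hmem 0 (by omega), f 1, ⟨hlt 0 (by omega), hcov 0 (by omega)⟩, fun t => f (t + 1),
      ⟨fun t ht => hmem _ (by omega), fun t ht => hlt _ (by omega),
        fun t ht => hcov _ (by omega)⟩, rfl, rfl⟩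
  · rintro ⟨ha, b, ⟨hab, hcovab⟩, f, ⟨hmem, hlt, hcov⟩, rfl, rfl⟩
    refine ⟨fun t => Nat.casesOn t a f, ⟨?_, ?_, ?_⟩, rfl, rfl⟩
    · rintro (_ | t) ht
      exacts [ha, hmem t (by omega)]
    · rintro (_ | t) ht
      exacts [hab, hlt t (by omega)]
    · rintro (_ | t) ht
      exacts [hcovab, hcov t (by omega)]

lemma HasSatChain.le {n : ℕ} (h : HasSatChain E a b n) : a ≤ b := by
  induction n generalizing a with
  | zero => exact (hasSatChain_zero.1 h).2.le
  | succ n ih =>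
    obtain ⟨-, c, hac, hcb⟩ := hasSatChain_succ.1 h
    exact hac.1.le.trans (ih hcb)

lemma HasSatChain.mem_left {n : ℕ} (h : HasSatChain E a b n) : a ∈ E := by
  obtain ⟨f, hf, rfl, -⟩ := h
  exact hf.1 0 n.zero_le

lemma HasSatChain.mem_right {n : ℕ} (h : HasSatChain E a b n) : b ∈ E := by
  obtain ⟨f, hf, -, rfl⟩ := h
  exact hf.1 n le_rfl

lemma HasSatChain.trans {n m : ℕ} (hab : HasSatChain E a b n) (hbc : HasSatChain E b c m) :
    HasSatChain E a c (n + m) := by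
  induction n generalizing a with
  | zero => obtain ⟨-, rfl⟩ := hasSatChain_zero.1 hab; simpa using hbc
  | succ n ih =>
    obtain ⟨ha, e, hae, heb⟩ := hasSatChain_succ.1 hab
    rw [Nat.add_right_comm]
    exact hasSatChain_succ.2 ⟨ha, e, hae, ih heb⟩

lemma hasSatChain_sum_range {x : ℕ → Fin d → ℤ} {n : ℕ → ℕ} {m : ℕ} (hx : x 0 ∈ E)
    (h : ∀ k < m, HasSatChain E (x k) (x (k + 1)) (n k)) :
    HasSatChain E (x 0) (x m) (∑ k ∈ Finset.range m, n k) := by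
  induction m with
  | zero => exact hasSatChain_zero.2 ⟨hx, rfl⟩
  | succ m ih =>
    rw [Finset.sum_range_succ]
    exact (ih fun k hk => h k (by omega)).trans (h m (by omega))

lemma exists_covByIn_le (hb : b ∈ E) (hab : a < b) : ∃ z ∈ E, CovByIn E a z ∧ z ≤ b := by
  have hfin : (E ∩ Set.Ioc a b).Finite :=
    (Set.finite_Icc a b).subset fun z hz => ⟨hz.2.1.le, hz.2.2⟩
  obtain ⟨z, ⟨hzE, haz, hzb⟩, hmin⟩ := hfin.exists_minimal ⟨b, hb, hab, le_rfl⟩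
  exact ⟨z, hzE, ⟨haz, fun w hw ⟨haw, hwz⟩ =>
    (hmin ⟨hw, haw, hwz.le.trans hzb⟩ hwz.le).not_gt hwz⟩, hzb⟩

theorem exists_hasSatChain {a b : Fin d → ℤ} (ha : a ∈ E) (hb : b ∈ E) (hab : a ≤ b) :
    ∃ n, HasSatChain E a b n := by
  rcases hab.eq_or_lt with rfl | hlt
  · exact ⟨0, hasSatChain_zero.2 ⟨ha, rfl⟩⟩
  · obtain ⟨z, hz, haz, hzb⟩ := exists_covByIn_le hb hlt
    have := coordSum_lt_coordSum haz.1
    have := coordSum_le_coordSum hzb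
    obtain ⟨n, hn⟩ := exists_hasSatChain hz hb hzb
    exact ⟨n + 1, hasSatChain_succ.2 ⟨ha, z, haz, hn⟩⟩
termination_by (coordSum b - coordSum a).toNat
decreasing_by omega

theorem hasSatChain_of_Icc_subset {a b : Fin d → ℤ} (hE : Set.Icc a b ⊆ E) (hab : a ≤ b) :
    HasSatChain E a b (coordSum b - coordSum a).toNat := by
  rcases hab.eq_or_lt with rfl | hlt
  · simpa using hasSatChain_zero.2 ⟨hE ⟨le_rfl, le_rfl⟩, rfl⟩
  obtain ⟨j, hj⟩ := (Pi.lt_def.1 hlt).2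
  have hstep : a + Pi.single j 1 ≤ b := fun k => by
    rcases eq_or_ne k j with rfl | hk
    · simpa using hj
    · simpa [hk] using hab k
  have hcov : CovByIn E a (a + Pi.single j 1) := by
    refine ⟨lt_add_of_pos_right a (Pi.single_pos.2 one_pos), fun w _ ⟨haw, hw⟩ => ?_⟩
    have := coordSum_lt_coordSum haw
    have := coordSum_lt_coordSum hw
    rw [coordSum_add_single] at this
    omega
  have hb := coordSum_le_coordSum hstep
  rw [coordSum_add_single] at hb
  have hlen : (coordSum b - coordSum a).toNat
      = (coordSum b - coordSum (a + Pi.single j 1)).toNat + 1 := by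
    rw [coordSum_add_single]
    omega
  rw [hlen]
  exact hasSatChain_succ.2 ⟨hE ⟨le_rfl, hab⟩, _, hcov,
    hasSatChain_of_Icc_subset ((Set.Icc_subset_Icc_left hcov.1.le).trans hE) hstep⟩
termination_by (coordSum b - coordSum a).toNat
decreasing_by rw [coordSum_add_single]; omega

end Chains

section Uniqueness

variable {d : ℕ} {E : Set (Fin d → ℤ)} {a b : Fin d → ℤ}

lemma MinClosedD.sep {p : (Fin d → ℤ) → Prop} (hE : MinClosedD E)
    (hp : ∀ β γ, p β → p γ → p (β ⊓ γ)) : MinClosedD {β ∈ E | p β} :=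
  fun β hβ γ hγ => ⟨hE β hβ.1 γ hγ.1, hp β γ hβ.2 hγ.2⟩

lemma MinClosedD.exists_isLeast (hE : MinClosedD E) {u lb : Fin d → ℤ} (hu : u ∈ E)
    (hlb : lb ∈ lowerBounds E) : ∃ μ, IsLeast E μ := by
  have hfin : (E ∩ Set.Icc lb u).Finite := (Set.finite_Icc lb u).subset Set.inter_subset_right
  obtain ⟨μ, ⟨hμE, -, hμu⟩, hmin⟩ := hfin.exists_minimal ⟨u, hu, hlb hu, le_rfl⟩
  refine ⟨μ, hμE, fun y hy => ?_⟩
  have hμy : μ ⊓ y ∈ E ∩ Set.Icc lb u :=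
    ⟨hE μ hμE y hy, le_inf (hlb hμE) (hlb hy), inf_le_left.trans hμu⟩
  exact (hmin hμy inf_le_left).trans inf_le_right

lemma CovByIn.inf_eq (hE : MinClosedD E) {β δ : Fin d → ℤ} (h : CovByIn E a β) (hβ : β ∈ E)
    (hδ : δ ∈ E) (haδ : a ≤ δ) (hβδ : ¬ β ≤ δ) : δ ⊓ β = a := by
  by_contra hne
  refine h.2 _ (hE δ hδ β hβ) ⟨(le_inf haδ h.1.le).lt_of_ne (Ne.symm hne), ?_⟩
  exact inf_le_right.lt_of_ne fun heq => hβδ (heq ▸ inf_le_left)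

/-- The diamond behind the Jordan–Hölder property of saturated chains in good sets. -/
lemma CovByIn.covByIn_of_isLeast (hE1 : MinClosedD E) (hE3 : G3PD E) {α β γ : Fin d → ℤ}
    (hα : CovByIn E a α) (hβ : CovByIn E a β) (hαE : α ∈ E) (hβE : β ∈ E) (hαβ : α ≠ β)
    (hγ : IsLeast {v ∈ E | α ≤ v ∧ β ≤ v} γ) : CovByIn E α γ := by
  obtain ⟨⟨hγE, hαγ, hβγ⟩, hγmin⟩ := hγ
  refine ⟨hαγ.lt_of_ne fun h => ?_, fun δ hδE ⟨hαδ, hδγ⟩ => ?_⟩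
  · exact hα.2 β hβE ⟨hβ.1, (h ▸ hβγ).lt_of_ne (Ne.symm hαβ)⟩
  have hβδ : ¬ β ≤ δ := fun h => (hγmin ⟨hδE, hαδ.le, h⟩).not_gt hδγ
  have hδβ := hβ.inf_eq hE1 hβE hδE (hα.1.le.trans hαδ.le) hβδ
  obtain ⟨i, hi⟩ := (Pi.lt_def.1 hβ.1).2
  have hδi : δ i = a i := by
    have := congrFun hδβ i
    simp only [Pi.inf_apply] at this
    omega
  have hαi : α i = δ i := le_antisymm (hαδ.le i) (hδi ▸ hα.1.le i)
  -- G3 at `i` lifts `α` above `γ`, yet keeps the coordinate where `α` and `δ` differ.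
  obtain ⟨ε, hεE, hεi, hεj⟩ := hE3 α hαE δ hδE hαδ.ne i hαi
  have hαε : α ≤ ε := fun j => by
    rcases eq_or_ne j i with rfl | hj
    · exact hεi.le
    · simpa [min_eq_left (hαδ.le j)] using (hεj j hj).1
  have hζβ : β ≤ ε ⊓ γ := by
    by_contra hc
    have := congrFun (hβ.inf_eq hE1 hβE (hE1 ε hεE γ hγE) (hα.1.le.trans (le_inf hαε hαγ)) hc) i
    simp only [Pi.inf_apply] at this
    have : β i ≤ γ i := hβγ i
    omega
  have hγε : γ ≤ ε := (hγmin ⟨hE1 ε hεE γ hγE, le_inf hαε hαγ, hζβ⟩).trans inf_le_left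
  obtain ⟨j, hj⟩ := (Pi.lt_def.1 hαδ).2
  have hji : j ≠ i := by rintro rfl; omega
  have hεj' := (hεj j hji).2 hj.ne
  rw [min_eq_left hj.le] at hεj'
  have : γ j ≤ ε j := hγε j
  have : δ j ≤ γ j := hδγ.le j
  omega

theorem HasSatChain.length_eq (hE1 : MinClosedD E) (hE3 : G3PD E) {n m : ℕ}
    (hn : HasSatChain E a b n) (hm : HasSatChain E a b m) : n = m := by
  induction n generalizing a m with
  | zero =>
    obtain ⟨-, rfl⟩ := hasSatChain_zero.1 hn
    cases m with
    | zero => rfl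
    | succ m =>
      obtain ⟨-, β, haβ, hβb⟩ := hasSatChain_succ.1 hm
      exact absurd (haβ.1.trans_le hβb.le) (lt_irrefl a)
  | succ n ih =>
    obtain ⟨-, α, haα, hαb⟩ := hasSatChain_succ.1 hn
    cases m with
    | zero =>
      obtain ⟨-, rfl⟩ := hasSatChain_zero.1 hm
      exact absurd (haα.1.trans_le hαb.le) (lt_irrefl a)
    | succ m =>
      obtain ⟨-, β, haβ, hβb⟩ := hasSatChain_succ.1 hm
      by_cases hαβ : α = β
      · subst hαβ
        rw [ih hαb hβb]
      have hbE : b ∈ E := hαb.mem_right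
      have hUB : MinClosedD {v ∈ E | α ≤ v ∧ β ≤ v} :=
        hE1.sep fun _ _ hv hw => ⟨le_inf hv.1 hw.1, le_inf hv.2 hw.2⟩
      obtain ⟨γ, hγ⟩ := hUB.exists_isLeast ⟨hbE, hαb.le, hβb.le⟩ fun v hv => hv.2.1
      have hαγ := haα.covByIn_of_isLeast hE1 hE3 haβ hαb.mem_left hβb.mem_left hαβ hγ
      have hβγ := haβ.covByIn_of_isLeast hE1 hE3 haα hβb.mem_left hαb.mem_left (Ne.symm hαβ)
        (by simpa only [and_comm] using hγ)
      obtain ⟨ℓ, hγb⟩ := exists_hasSatChain hγ.1.1 hbE (hγ.2 ⟨hbE, hαb.le, hβb.le⟩)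
      have hnℓ : n = ℓ + 1 := ih hαb (hasSatChain_succ.2 ⟨hαb.mem_left, γ, hαγ, hγb⟩)
      rw [ih (hnℓ ▸ hasSatChain_succ.2 ⟨hβb.mem_left, γ, hβγ, hγb⟩) hβb]

end Uniqueness

section Distances

variable {d : ℕ} {E F : Set (Fin d → ℤ)} {a b : Fin d → ℤ}

lemma chainDistD_eq_of_hasSatChain (hE1 : MinClosedD E) (hE3 : G3PD E) {n : ℕ}
    (h : HasSatChain E a b n) : chainDistD E a b = n := by
  have : {m | HasSatChain E a b m} = {n} :=
    Set.ext fun m => ⟨fun hm => hm.length_eq hE1 hE3 h, fun hm => hm ▸ h⟩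
  exact (congrArg sSup this).trans (csSup_singleton _)

lemma minClosedD_Ici (b : Fin d → ℤ) : MinClosedD (Set.Ici b) :=
  fun _ hx _ hy => Set.mem_Ici.2 (le_inf hx hy)

lemma g3PD_Ici (b : Fin d → ℤ) : G3PD (Set.Ici b) := by
  intro α hα β hβ _ i hi
  have hle : α ⊓ β ≤ α ⊓ β + Pi.single i 1 :=
    le_add_of_nonneg_right (Pi.single_nonneg.2 zero_le_one)
  refine ⟨α ⊓ β + Pi.single i 1, Set.mem_Ici.2 ((le_inf hα hβ).trans hle), ?_, fun j hj => ?_⟩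
  · simp [hi]
  · simp [hj]

lemma chainDistD_Ici (hα : b ≤ a) :
    chainDistD (Set.Ici b) b a = (coordSum a - coordSum b).toNat :=
  chainDistD_eq_of_hasSatChain (minClosedD_Ici b) (g3PD_Ici b)
    (hasSatChain_of_Icc_subset (fun _ hx => hx.1) hα)

lemma minElD_eq_of_isLeast (h : IsLeast E b) : minElD E = b :=
  funext fun i => ((Function.monotone_eval i).map_isLeast h).csInf_eq

lemma distD_eq_of_forall_ge {β₀ : Fin d → ℤ} {z : ℤ} (hF : Set.Ici β₀ ⊆ F)
    (h : ∀ α ∈ F, β₀ ≤ α →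
      (chainDistD E (minElD E) α : ℤ) - (chainDistD F (minElD F) α : ℤ) = z) :
    distD E F = z := by
  have : {z' : ℤ | ∃ β : Fin d → ℤ, ∀ α ∈ F, β ≤ α →
      (chainDistD E (minElD E) α : ℤ) - (chainDistD F (minElD F) α : ℤ) = z'} = {z} := by
    refine Set.ext fun z' => ⟨fun ⟨β, hβ⟩ => ?_, fun hz' => ⟨β₀, hz' ▸ h⟩⟩
    have hmem : β ⊔ β₀ ∈ F := hF (Set.mem_Ici.2 le_sup_right)
    exact (hβ _ hmem le_sup_left).symm.trans (h _ hmem le_sup_right)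
  exact (congrArg sSup this).trans (csSup_singleton _)

end Distances

section GoodSemigroup

variable {d : ℕ} {S : Set (Fin d → ℤ)}

lemma IsGoodD.nonneg (hS : IsGoodD S) {β : Fin d → ℤ} (hβ : β ∈ S) : 0 ≤ β := hS.1 hβ

lemma IsGoodD.minClosed (hS : IsGoodD S) : MinClosedD S := hS.2.2.2.1

lemma IsGoodD.g3 (hS : IsGoodD S) : G3PD S := hS.2.2.2.2.2

lemma IsGoodD.isLeast_zero (hS : IsGoodD S) : IsLeast S 0 :=
  ⟨hS.2.1, fun _ hβ => hS.nonneg hβ⟩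

lemma IsGoodD.nonneg_of_Ici_subset (hS : IsGoodD S) {δ : Fin d → ℤ} (hδ : ∀ y, δ ≤ y → y ∈ S) :
    0 ≤ δ := fun i => by
  have hle : δ ≤ Function.update (δ ⊔ 0) i (δ i) := by
    intro k
    rcases eq_or_ne k i with rfl | hk
    · simp
    · simp [hk]
  simpa using hS.nonneg (hδ _ hle) i

lemma IsGoodD.exists_Ici_subset_apply_eq_condD (hS : IsGoodD S) (i : Fin d) :
    ∃ δ : Fin d → ℤ, (∀ y, δ ≤ y → y ∈ S) ∧ δ i = condD S i := by
  obtain ⟨δ₀, hδ₀⟩ := hS.2.2.2.2.1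
  let Δ : Set ℤ := (fun δ : Fin d → ℤ => δ i) '' {δ | ∀ y, δ ≤ y → y ∈ S}
  have hbdd : BddBelow Δ := ⟨0, by rintro _ ⟨δ, hδ, rfl⟩; exact hS.nonneg_of_Ici_subset hδ i⟩
  have hne : Δ.Nonempty := ⟨δ₀ i, δ₀, hδ₀, rfl⟩
  exact Int.csInf_mem hne hbdd

/-- `y` is the infimum of elements `y ⊔ δ` of `S` with `δ + ℕ^d ⊆ S` and `δ i = c i`. -/
lemma IsGoodD.mem_of_condD_le (hS : IsGoodD S) {y : Fin d → ℤ} (hy : condD S ≤ y) : y ∈ S := by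
  rcases isEmpty_or_nonempty (Fin d) with hd | hd
  · obtain ⟨δ, hδ⟩ := hS.2.2.2.2.1
    exact hδ y fun i => hd.elim i
  choose δ hδ hδi using hS.exists_Ici_subset_apply_eq_condD
  have hinf : Finset.univ.inf' Finset.univ_nonempty (fun i => y ⊔ δ i) = y := by
    refine le_antisymm (fun k => ?_) (Finset.le_inf' _ _ fun i _ => le_sup_left)
    calc (Finset.univ.inf' Finset.univ_nonempty (fun i => y ⊔ δ i)) k
        ≤ (y ⊔ δ k) k := Finset.inf'_le (fun i => y ⊔ δ i) (Finset.mem_univ k) k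
      _ = y k := by simpa [hδi] using hy k
  rw [← hinf]
  exact Finset.inf'_mem S hS.minClosed _ _ _ fun i _ => hδ i _ le_sup_right

lemma IsGoodD.condD_mem (hS : IsGoodD S) : condD S ∈ S := hS.mem_of_condD_le le_rfl

lemma IsGoodD.condD_nonneg (hS : IsGoodD S) : 0 ≤ condD S := hS.nonneg hS.condD_mem

lemma IsGoodD.cIdealD_eq (hS : IsGoodD S) : CIdealD S = Set.Ici (condD S) :=
  Set.ext fun _ => ⟨fun h => h.2, fun h => ⟨hS.mem_of_condD_le h, h⟩⟩

end GoodSemigroup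

section CornerChain

variable {d : ℕ} {S : Set (Fin d → ℤ)} {i : Fin d} {a : ℤ} {μ μ' ν ν' : Fin d → ℤ}

def condPrefix (S : Set (Fin d → ℤ)) (m : ℕ) : Set (Fin d → ℤ) :=
  {β ∈ S | ∀ j : Fin d, (j : ℕ) < m → condD S j ≤ β j}

def condSlice (S : Set (Fin d → ℤ)) (i : Fin d) (a : ℤ) : Set (Fin d → ℤ) :=
  {β ∈ condPrefix S i | a ≤ β i}

def condValues (S : Set (Fin d → ℤ)) (i : Fin d) : Set ℤ :=
  {x | x ≤ condD S i ∧ ∃ β ∈ condPrefix S i, β i = x}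

/-- The set `P_i` of the statement. -/
def condProj (S : Set (Fin d → ℤ)) (i : Fin d) : Set ℤ :=
  {x : ℤ | 0 ≤ x ∧ x < condD S i ∧ ∃ β ∈ S, β i = x ∧ ∀ j, j < i → β j = condD S j}

lemma condD_mem_condSlice (hS : IsGoodD S) (ha : a ≤ condD S i) : condD S ∈ condSlice S i a :=
  ⟨⟨hS.condD_mem, fun _ _ => le_rfl⟩, ha⟩

lemma minClosedD_condPrefix (hS : IsGoodD S) (m : ℕ) : MinClosedD (condPrefix S m) :=
  hS.minClosed.sep fun _ _ hβ hγ j hj => le_inf (hβ j hj) (hγ j hj)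

lemma exists_isLeast_condPrefix (hS : IsGoodD S) (m : ℕ) : ∃ μ, IsLeast (condPrefix S m) μ :=
  (minClosedD_condPrefix hS m).exists_isLeast ⟨hS.condD_mem, fun _ _ => le_rfl⟩
    fun _ hβ => hS.nonneg hβ.1

lemma exists_isLeast_condSlice (hS : IsGoodD S) (ha : a ≤ condD S i) :
    ∃ ν, IsLeast (condSlice S i a) ν :=
  have hslice : MinClosedD (condSlice S i a) :=
    (minClosedD_condPrefix hS i).sep fun _ _ hβ hγ => le_inf hβ hγ
  hslice.exists_isLeast (condD_mem_condSlice hS ha) fun _ hβ => hS.nonneg hβ.1.1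

lemma isLeast_condPrefix_zero (hS : IsGoodD S) : IsLeast (condPrefix S 0) 0 :=
  ⟨⟨hS.2.1, fun _ hj => absurd hj (Nat.not_lt_zero _)⟩, fun _ hβ => hS.nonneg hβ.1⟩

lemma isLeast_condPrefix_dim (hS : IsGoodD S) : IsLeast (condPrefix S d) (condD S) :=
  ⟨⟨hS.condD_mem, fun _ _ => le_rfl⟩, fun _ hβ j => hβ.2 j j.isLt⟩

lemma IsLeast.apply_eq_of_mem_condValues (ha : a ∈ condValues S i)
    (hν : IsLeast (condSlice S i a) ν) : ν i = a := by
  obtain ⟨-, β, hβ, rfl⟩ := ha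
  exact le_antisymm (hν.2 ⟨hβ, le_rfl⟩ i) hν.1.2

lemma condSlice_eq_of_isLeast (hμ : IsLeast (condPrefix S i) μ) :
    condSlice S i (μ i) = condPrefix S i :=
  Set.ext fun _ => ⟨fun h => h.1, fun h => ⟨h, hμ.2 h i⟩⟩

lemma condSlice_condD : condSlice S i (condD S i) = condPrefix S (i + 1) := by
  ext β
  refine ⟨fun ⟨⟨hβS, hβ⟩, hβi⟩ => ⟨hβS, fun j hj => ?_⟩,
    fun ⟨hβS, hβ⟩ => ⟨⟨hβS, fun j hj => hβ j (by omega)⟩, hβ i (by omega)⟩⟩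
  rcases (Nat.lt_succ_iff.1 hj).lt_or_eq with hj | hj
  · exact hβ j hj
  · exact (Fin.ext hj) ▸ hβi

/-- (G3) at the coordinate `i`, applied to `ν` and an element of `S` strictly between `ν` and
`ν'`, would produce an element of `condSlice S i a'` not above `ν'`. -/
lemma covByIn_of_isLeast_condSlice (hS : IsGoodD S) {a' : ℤ} (ha : a ∈ condValues S i)
    (ha' : a' ∈ condValues S i) (haa' : a < a') (hnext : ∀ v ∈ condValues S i, a < v → a' ≤ v)
    (hν : IsLeast (condSlice S i a) ν) (hν' : IsLeast (condSlice S i a') ν') :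
    CovByIn S ν ν' := by
  have hνi := hν.apply_eq_of_mem_condValues ha
  have hν'i := hν'.apply_eq_of_mem_condValues ha'
  have hνν' : ν ≤ ν' := hν.2 ⟨hν'.1.1, by omega⟩
  refine ⟨hνν'.lt_of_ne fun h => by rw [h] at hνi; omega, fun γ hγS ⟨hνγ, hγν'⟩ => ?_⟩
  have mem_condPrefix : ∀ β ∈ S, (∀ j, j ≠ i → ν j ≤ β j) → β ∈ condPrefix S i :=
    fun β hβ hle => ⟨hβ, fun j hj => (hν.1.1.2 j hj).trans (hle j (Fin.ne_of_lt hj))⟩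
  have not_mem_between : ∀ β ∈ condPrefix S i, a < β i → a' ≤ β i := fun β hβ hβi =>
    le_of_not_gt fun h => (hnext _ ⟨by have := ha'.1; omega, β, hβ, rfl⟩ hβi).not_gt h
  have hγF := mem_condPrefix γ hγS fun j _ => hνγ.le j
  have hγi : γ i = a := by
    have : γ i ≤ ν' i := hγν'.le i
    have : ν i ≤ γ i := hνγ.le i
    refine le_antisymm (le_of_not_gt fun h => ?_) (by omega)
    exact (hν'.2 ⟨hγF, not_mem_between γ hγF h⟩).not_gt hγν'
  obtain ⟨ε, hεS, hεi, hεj⟩ := hS.g3 ν hν.1.1.1 γ hγS hνγ.ne i (by omega)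
  have hεF := mem_condPrefix ε hεS fun j hj => by simpa [min_eq_left (hνγ.le j)] using (hεj j hj).1
  have hν'ε : ν' ≤ ε := hν'.2 ⟨hεF, not_mem_between ε hεF (by omega)⟩
  obtain ⟨j, hj⟩ := (Pi.lt_def.1 hνγ).2
  have hji : j ≠ i := by rintro rfl; omega
  have hεj' := (hεj j hji).2 hj.ne
  rw [min_eq_left hj.le] at hεj'
  have : ν' j ≤ ε j := hν'ε j
  have : γ j ≤ ν' j := hγν'.le j
  omega

theorem hasSatChain_condSlice (hS : IsGoodD S) {i : Fin d} {a : ℤ} {ν ν' : Fin d → ℤ}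
    (ha : a ∈ condValues S i) (hν : IsLeast (condSlice S i a) ν)
    (hν' : IsLeast (condSlice S i (condD S i)) ν') :
    HasSatChain S ν ν' {v ∈ condValues S i | a ≤ v ∧ v < condD S i}.ncard := by
  rcases ha.1.lt_or_eq with hlt | hac
  · obtain ⟨a', ⟨ha', haa'⟩, hnext⟩ :=
      Int.exists_least_of_bdd (P := fun v => v ∈ condValues S i ∧ a < v) ⟨a, fun _ h => h.2.le⟩
        ⟨condD S i, ⟨le_rfl, condD S, ⟨hS.condD_mem, fun _ _ => le_rfl⟩, rfl⟩, hlt⟩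
    have ha'c := ha'.1
    obtain ⟨ν'', hν''⟩ := exists_isLeast_condSlice hS ha'c
    have hcount : {v ∈ condValues S i | a ≤ v ∧ v < condD S i}
        = insert a {v ∈ condValues S i | a' ≤ v ∧ v < condD S i} := by
      ext v
      constructor
      · rintro ⟨hv, hav, hvc⟩
        rcases hav.lt_or_eq with h | rfl
        · exact Or.inr ⟨hv, hnext v ⟨hv, h⟩, hvc⟩
        · exact Or.inl rfl
      · rintro (rfl | ⟨hv, ha'v, hvc⟩)
        · exact ⟨ha, le_rfl, hlt⟩
        · exact ⟨hv, by omega, hvc⟩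
    rw [hcount, Set.ncard_insert_of_notMem (fun h => by have := h.2.1; omega)
      ((Set.finite_Icc a' (condD S i)).subset fun v hv => ⟨hv.2.1, hv.2.2.le⟩)]
    exact hasSatChain_succ.2 ⟨hν.1.1.1, ν'',
      covByIn_of_isLeast_condSlice hS ha ha' haa' (fun v hv h => hnext v ⟨hv, h⟩) hν hν'',
      hasSatChain_condSlice hS ha' hν'' hν'⟩
  · have hempty : {v ∈ condValues S i | a ≤ v ∧ v < condD S i} = ∅ :=
      Set.eq_empty_of_forall_notMem fun v hv => by have := hv.2; omega
    rw [hempty, Set.ncard_empty, hν.unique (hac ▸ hν')]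
    exact hasSatChain_zero.2 ⟨hν'.1.1.1, rfl⟩
termination_by (condD S i - a).toNat
decreasing_by omega

lemma condValues_sep_eq_condProj (hS : IsGoodD S) (hμ : IsLeast (condPrefix S i) μ) :
    {v ∈ condValues S i | μ i ≤ v ∧ v < condD S i} = condProj S i := by
  ext x
  constructor
  · rintro ⟨⟨-, β, hβ, rfl⟩, -, hx⟩
    -- Cutting `β` down to the conductor in the coordinates before `i` keeps it in `S`.
    let η : Fin d → ℤ := fun j => if j < i then condD S j else condD S j ⊔ β j
    have hη : η ∈ S := hS.mem_of_condD_le fun j => by by_cases hj : j < i <;> simp [η, hj]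
    refine ⟨hS.nonneg hβ.1 i, hx, β ⊓ η, hS.minClosed _ hβ.1 _ hη, ?_, fun j hj => ?_⟩
    · simp [η]
    · simpa [η, hj] using hβ.2 j hj
  · rintro ⟨-, hx, β, hβS, rfl, hβ⟩
    have hβF : β ∈ condPrefix S i := ⟨hβS, fun j hj => (hβ j hj).ge⟩
    exact ⟨⟨hx.le, β, hβF, rfl⟩, hμ.2 hβF i, hx⟩

lemma hasSatChain_condPrefix_succ (hS : IsGoodD S) (hμ : IsLeast (condPrefix S i) μ)
    (hμ' : IsLeast (condPrefix S (i + 1)) μ') : HasSatChain S μ μ' (condProj S i).ncard := by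
  rw [← condValues_sep_eq_condProj hS hμ]
  refine hasSatChain_condSlice hS ⟨hμ.2 ⟨hS.condD_mem, fun _ _ => le_rfl⟩ i, μ, hμ.1, rfl⟩ ?_ ?_
  · rwa [condSlice_eq_of_isLeast hμ]
  · rwa [condSlice_condD]

theorem hasSatChain_zero_condD (hS : IsGoodD S) :
    HasSatChain S 0 (condD S) (∑ i, (condProj S i).ncard) := by
  choose μ hμ using exists_isLeast_condPrefix hS
  have h := hasSatChain_sum_range (m := d)
    (n := fun k => if hk : k < d then (condProj S ⟨k, hk⟩).ncard else 0) (hμ 0).1.1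
    fun k hk => by
      rw [dif_pos hk]
      exact hasSatChain_condPrefix_succ hS (i := ⟨k, hk⟩) (hμ k) (hμ (k + 1))
  rw [(hμ 0).unique (isLeast_condPrefix_zero hS), (hμ d).unique (isLeast_condPrefix_dim hS),
    Finset.sum_range] at h
  simpa using h

lemma IsGoodD.chainDistD_zero (hS : IsGoodD S) {α : Fin d → ℤ} (hα : condD S ≤ α) :
    chainDistD S 0 α = ∑ i, (condProj S i).ncard + (coordSum α - coordSum (condD S)).toNat :=
  chainDistD_eq_of_hasSatChain hS.minClosed hS.g3 <| (hasSatChain_zero_condD hS).trans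
    (hasSatChain_of_Icc_subset (fun _ hy => hS.mem_of_condD_le hy.1) hα)

end CornerChain

theorem length_genus_proj_formula_general {d : ℕ} (S : Set (Fin d → ℤ))
    (hS : IsGoodD S) :
    glenD S = ∑ i : Fin d,
      (({x : ℤ | 0 ≤ x ∧ x < condD S i ∧
          ∃ β ∈ S, β i = x ∧ ∀ j, j < i → β j = condD S j}.ncard : ℤ)) ∧
    genusD S = ∑ i : Fin d,
      (condD S i -
        ({x : ℤ | 0 ≤ x ∧ x < condD S i ∧
          ∃ β ∈ S, β i = x ∧ ∀ j, j < i → β j = condD S j}.ncard : ℤ)) := by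
  show glenD S = ∑ i, ((condProj S i).ncard : ℤ) ∧
    genusD S = ∑ i, (condD S i - ((condProj S i).ncard : ℤ))
  have hmin : minElD S = 0 := minElD_eq_of_isLeast hS.isLeast_zero
  refine ⟨distD_eq_of_forall_ge hS.cIdealD_eq.ge fun α _ hα => ?_,
    distD_eq_of_forall_ge (fun _ h => hS.mem_of_condD_le h) fun α _ hα => ?_⟩
  · rw [hS.cIdealD_eq, minElD_eq_of_isLeast isLeast_Ici, hmin, hS.chainDistD_zero hα,
      chainDistD_Ici hα]
    push_cast
    exact add_sub_cancel_right _ _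
  · have horth : orthD d = Set.Ici 0 := rfl
    have hzero : coordSum (0 : Fin d → ℤ) = 0 := Finset.sum_const_zero
    have hc := coordSum_le_coordSum hS.condD_nonneg
    have hcα := coordSum_le_coordSum hα
    rw [horth, minElD_eq_of_isLeast isLeast_Ici, hmin, chainDistD_Ici (hS.condD_nonneg.trans hα),
      hS.chainDistD_zero hα, Finset.sum_sub_distrib]
    change _ = coordSum (condD S) - _
    push_cast
    omega

/-- For a local good semigroup `S ⊆ ℕ^d` with conductor
`(c₁,…,c_d)`, letting `P_i = {a ∈ ℕ : a < c_i` and there is `β ∈ S` with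
`β_i = a` and `β_j = c_j` for all `j < i}`, one has
`l(S) = Σᵢ |P_i|` and `g(S) = Σᵢ (c_i − |P_i|)`. -/
theorem length_genus_proj_formula {d : ℕ} (S : Set (Fin d → ℤ))
    (hS : IsGoodD S) (hl : IsLocalD S) :
    glenD S = ∑ i : Fin d,
      (({x : ℤ | 0 ≤ x ∧ x < condD S i ∧
          ∃ β ∈ S, β i = x ∧ ∀ j, j < i → β j = condD S j}.ncard : ℤ)) ∧
    genusD S = ∑ i : Fin d,
      (condD S i -
        ({x : ℤ | 0 ≤ x ∧ x < condD S i ∧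
          ∃ β ∈ S, β i = x ∧ ∀ j, j < i → β j = condD S j}.ncard : ℤ)) :=
  length_genus_proj_formula_general S hS
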